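/- arXiv:1508.04681 — 2 statements merged into one kernel-verified Lean document; each statement's English description precedes it below -/
import Mathlib

section
/- Let ρ be the spectral radius of the 9×9 integer matrix F_{2,2,2}, i.e., the maximum modulus of the complex roots of its characteristic polynomial. Then ρ is a real root of t⁴ − 8t³ + 10t² − 8t + 1 and satisfies 6 < ρ < 7. -/
open Matrix

/-- Axis (0 = x, 1 = y, 2 = z) of a basis index `t ≥ 3` (curve classes):
indices `3,…,2+k` are `C_{x,i}`, indices `3+k,…,2+k+l` are `C_{y,i}`,
and the remaining indices are `C_{z,i}`. -/
def axOf (k l : ℕ) (t : ℕ) : ℕ :=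
  if t < 3 + k then 0 else if t < 3 + k + l then 1 else 2

/-- The matrix of `T_x` in the basis
`E_x, E_y, E_z, C_{x,1},…,C_{x,k}, C_{y,1},…,C_{y,l}, C_{z,1},…,C_{z,m}`:
`T_x` fixes `E_y`, `E_z` and each `C_{x,i}`, sends `C_{y,i} ↦ E_z − C_{y,i}`,
`C_{z,i} ↦ E_y − C_{z,i}`, and `E_x ↦ −E_x + 2E_y + 2E_z − (C_{x,1}+…+C_{x,k})`. -/
def Tx (k l m : ℕ) : Matrix (Fin (3 + k + l + m)) (Fin (3 + k + l + m)) ℤ :=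
  fun i j =>
    if (j : ℕ) = 0 then
      if (i : ℕ) = 0 then -1
      else if (i : ℕ) < 3 then 2
      else if axOf k l i = 0 then -1 else 0
    else if (j : ℕ) < 3 then (if i = j then 1 else 0)
    else if axOf k l j = 0 then (if i = j then 1 else 0)
    else if axOf k l j = 1 then (if (i : ℕ) = 2 then 1 else if i = j then -1 else 0)
    else (if (i : ℕ) = 1 then 1 else if i = j then -1 else 0)

/-- The matrix of `T_y`: it fixes `E_x`, `E_z` and each `C_{y,i}`, sends
`C_{x,i} ↦ E_z − C_{x,i}`, `C_{z,i} ↦ E_x − C_{z,i}`, and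
`E_y ↦ 2E_x − E_y + 2E_z − (C_{y,1}+…+C_{y,l})`. -/
def Ty (k l m : ℕ) : Matrix (Fin (3 + k + l + m)) (Fin (3 + k + l + m)) ℤ :=
  fun i j =>
    if (j : ℕ) = 1 then
      if (i : ℕ) = 1 then -1
      else if (i : ℕ) < 3 then 2
      else if axOf k l i = 1 then -1 else 0
    else if (j : ℕ) < 3 then (if i = j then 1 else 0)
    else if axOf k l j = 1 then (if i = j then 1 else 0)
    else if axOf k l j = 0 then (if (i : ℕ) = 2 then 1 else if i = j then -1 else 0)
    else (if (i : ℕ) = 0 then 1 else if i = j then -1 else 0)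

/-- The matrix of `T_z`: it fixes `E_x`, `E_y` and each `C_{z,i}`, sends
`C_{x,i} ↦ E_y − C_{x,i}`, `C_{y,i} ↦ E_x − C_{y,i}`, and
`E_z ↦ 2E_x + 2E_y − E_z − (C_{z,1}+…+C_{z,m})`. -/
def Tz (k l m : ℕ) : Matrix (Fin (3 + k + l + m)) (Fin (3 + k + l + m)) ℤ :=
  fun i j =>
    if (j : ℕ) = 2 then
      if (i : ℕ) = 2 then -1
      else if (i : ℕ) < 3 then 2
      else if axOf k l i = 2 then -1 else 0
    else if (j : ℕ) < 3 then (if i = j then 1 else 0)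
    else if axOf k l j = 2 then (if i = j then 1 else 0)
    else if axOf k l j = 0 then (if (i : ℕ) = 1 then 1 else if i = j then -1 else 0)
    else (if (i : ℕ) = 0 then 1 else if i = j then -1 else 0)

/-- The matrix of `F = T_z ∘ T_y ∘ T_x`. -/
def Fm (k l m : ℕ) : Matrix (Fin (3 + k + l + m)) (Fin (3 + k + l + m)) ℤ :=
  Tz k l m * Ty k l m * Tx k l m

/-- The characteristic polynomial (over `ℂ`) of the integer matrix `F_{k,l,m}`. -/
noncomputable def cpF (k l m : ℕ) : Polynomial ℂ :=
  Matrix.charpoly ((Fm k l m).map (fun x => (x : ℂ)))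

/-!
`F_{2,2,2}` is annihilated by `(t² - 1)(t⁴ - 8t³ + 10t² - 8t + 1)`, so its eigenvalues are `±1` or
roots of the palindromic quartic, which splits over `ℝ(√2)` as
`(t² - (4 + 2√2)t + 1)(t² - (4 - 2√2)t + 1)`. The roots of the first factor are the reals
`ρ = 2 + √2 + √(5 + 4√2) ≈ 6.68` and `1/ρ`, those of the second have modulus at most `3`, and `ρ`
is an eigenvalue because an explicit eigenvector (polynomial in `ρ`) exists.
-/

open Polynomial

theorem spectrum.eval_eq_zero_of_aeval_eq_zero {𝕜 A : Type*} [Field 𝕜] [Ring A] [Nontrivial A]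
    [Algebra 𝕜 A] {a : A} {p : 𝕜[X]} (hp : aeval a p = 0) {z : 𝕜} (hz : z ∈ spectrum 𝕜 a) :
    p.eval z = 0 := by
  have := spectrum.subset_polynomial_aeval a p ⟨z, hz, rfl⟩
  rwa [hp, spectrum.zero_eq, Set.mem_singleton_iff] at this

theorem Matrix.mem_spectrum_of_mulVec_eq_smul {R n : Type*} [CommRing R] [Fintype n]
    [DecidableEq n] {A : Matrix n n R} {μ : R} {v : n → R} (hv : v ≠ 0) (h : A *ᵥ v = μ • v) :
    μ ∈ spectrum R A := by
  rw [← Matrix.spectrum_toLin']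
  exact (Module.End.hasEigenvalue_of_hasEigenvector
    ⟨Module.End.mem_eigenspace_iff.mpr (by simpa using h), hv⟩).mem_spectrum

theorem Complex.norm_le_abs_add_one_of_sq_eq {z : ℂ} {b : ℝ} (hz : z ^ 2 = b * z - 1) :
    ‖z‖ ≤ |b| + 1 := by
  have hsq : ‖z‖ ^ 2 ≤ |b| * ‖z‖ + 1 := by
    calc ‖z‖ ^ 2 = ‖(b : ℂ) * z - 1‖ := by rw [← norm_pow, hz]
      _ ≤ ‖(b : ℂ) * z‖ + ‖(1 : ℂ)‖ := norm_sub_le _ _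
      _ = |b| * ‖z‖ + 1 := by rw [norm_mul, Complex.norm_real, Real.norm_eq_abs, norm_one]
  nlinarith [abs_nonneg b, norm_nonneg z]

theorem quartic_eq_mul_quadratics {R : Type*} [CommRing R] {s : R} (hs : s ^ 2 = 2) (z : R) :
    z ^ 4 - 8 * z ^ 3 + 10 * z ^ 2 - 8 * z + 1 =
      (z ^ 2 - (4 + 2 * s) * z + 1) * (z ^ 2 - (4 - 2 * s) * z + 1) := by
  linear_combination 4 * z ^ 2 * hs

noncomputable def dominantRoot : ℝ := 2 + √2 + √(5 + 4 * √2)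

theorem dominantRoot_quadratic :
    dominantRoot ^ 2 - (4 + 2 * √2) * dominantRoot + 1 = 0 := by
  have hs : √2 ^ 2 = 2 := Real.sq_sqrt zero_le_two
  have ht : √(5 + 4 * √2) ^ 2 = 5 + 4 * √2 := Real.sq_sqrt (by positivity)
  unfold dominantRoot
  linear_combination ht - hs

theorem dominantRoot_quartic :
    dominantRoot ^ 4 - 8 * dominantRoot ^ 3 + 10 * dominantRoot ^ 2 - 8 * dominantRoot + 1 = 0 := by
  rw [quartic_eq_mul_quadratics (Real.sq_sqrt zero_le_two), dominantRoot_quadratic, zero_mul]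

theorem dominantRoot_mem_Ioo : 6 < dominantRoot ∧ dominantRoot < 7 := by
  have hs : √2 ^ 2 = 2 := Real.sq_sqrt zero_le_two
  have ht : √(5 + 4 * √2) ^ 2 = 5 + 4 * √2 := Real.sq_sqrt (by positivity)
  have hs0 := Real.sqrt_nonneg 2
  have ht0 := Real.sqrt_nonneg (5 + 4 * √2)
  have hs1 : 1.4 < √2 ∧ √2 < 1.5 := by constructor <;> nlinarith
  have ht1 : 2.6 < √(5 + 4 * √2) ∧ √(5 + 4 * √2) < 3.5 := by constructor <;> nlinarith
  unfold dominantRoot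
  constructor <;> linarith

theorem norm_le_dominantRoot_of_quartic {z : ℂ}
    (hz : z ^ 4 - 8 * z ^ 3 + 10 * z ^ 2 - 8 * z + 1 = 0) : ‖z‖ ≤ dominantRoot := by
  have hs : √2 ^ 2 = 2 := Real.sq_sqrt zero_le_two
  have hr := dominantRoot_mem_Ioo
  rw [quartic_eq_mul_quadratics (s := (√2 : ℂ)) (by exact_mod_cast hs)] at hz
  rcases mul_eq_zero.mp hz with hz | hz
  · have hq := dominantRoot_quadratic
    have hroots : (z - dominantRoot) * (z - (4 + 2 * √2 - dominantRoot : ℝ)) = 0 := by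
      have hqC := congrArg ((↑) : ℝ → ℂ) hq
      push_cast at hqC ⊢
      linear_combination hz - hqC
    rcases mul_eq_zero.mp hroots with h | h
    · rw [sub_eq_zero.mp h, Complex.norm_real, Real.norm_of_nonneg (by linarith)]
    · -- the other root is `1 / dominantRoot < 1`
      rw [sub_eq_zero.mp h, Complex.norm_real, Real.norm_eq_abs, abs_le]
      constructor <;> nlinarith
  · have hb : |4 - 2 * √2| ≤ 2 := by rw [abs_le]; constructor <;> nlinarith [Real.sqrt_nonneg 2]
    have := Complex.norm_le_abs_add_one_of_sq_eq (z := z) (b := 4 - 2 * √2)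
      (by push_cast; linear_combination hz)
    linarith

def F222 : Matrix (Fin 9) (Fin 9) ℤ :=
  !![7, 4, 2, 2, 2, 1, 1, 3, 3; 8, 3, 2, 1, 1, 2, 2, 3, 3; -4, -2, -1, -1, -1, -1, -1, -2, -2;
     -1, 0, 0, 1, 0, 0, 0, 0, 0; -1, 0, 0, 0, 1, 0, 0, 0, 0; 2, 1, 0, 0, 0, 1, 0, 1, 1;
     2, 1, 0, 0, 0, 0, 1, 1, 1; -4, -2, -1, -1, -1, -1, -1, -1, -2;
     -4, -2, -1, -1, -1, -1, -1, -2, -1]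

theorem Fm_two_two_two : Fm 2 2 2 = F222 := by decide

theorem cpF_two_two_two : cpF 2 2 2 = (F222.map ((↑) : ℤ → ℂ)).charpoly := by
  rw [cpF, Fm_two_two_two]

theorem F222_sextic_eq_zero :
    (F222 ^ 2 - 1) * (F222 ^ 4 - 8 * F222 ^ 3 + 10 * F222 ^ 2 - 8 * F222 + 1) = 0 := by
  decide

theorem sextic_eq_zero_of_isRoot_cpF {z : ℂ} (hz : (cpF 2 2 2).IsRoot z) :
    (z ^ 2 - 1) * (z ^ 4 - 8 * z ^ 3 + 10 * z ^ 2 - 8 * z + 1) = 0 := by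
  rw [cpF_two_two_two, ← Matrix.mem_spectrum_iff_isRoot_charpoly] at hz
  have hA := congrArg (Int.castRingHom ℂ).mapMatrix F222_sextic_eq_zero
  simp only [map_mul, map_sub, map_add, map_pow, map_one, map_ofNat, map_zero] at hA
  have hp : aeval (F222.map ((↑) : ℤ → ℂ))
      ((X ^ 2 - 1) * (X ^ 4 - 8 * X ^ 3 + 10 * X ^ 2 - 8 * X + 1) : ℂ[X]) = 0 := by
    simp only [map_mul, map_sub, map_add, map_pow, aeval_X, map_one, map_ofNat]
    exact hA
  simpa using spectrum.eval_eq_zero_of_aeval_eq_zero hp hz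

theorem norm_le_dominantRoot_of_isRoot_cpF {z : ℂ} (hz : (cpF 2 2 2).IsRoot z) :
    ‖z‖ ≤ dominantRoot := by
  rcases mul_eq_zero.mp (sextic_eq_zero_of_isRoot_cpF hz) with h | h
  · have hz1 : ‖z‖ ^ 2 = 1 := by rw [← norm_pow, sub_eq_zero.mp h, norm_one]
    nlinarith [dominantRoot_mem_Ioo.1, norm_nonneg z]
  · exact norm_le_dominantRoot_of_quartic h

def F222Eigenvector {R : Type*} [CommRing R] (c : R) : Fin 9 → R :=
  ![15 - 23 * c + 23 * c ^ 2 - 3 * c ^ 3, -31 + 41 * c - 39 * c ^ 2 + 5 * c ^ 3,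
    -28 + 40 * c - 32 * c ^ 2 + 4 * c ^ 3, 18 - 29 * c + 24 * c ^ 2 - 3 * c ^ 3,
    18 - 29 * c + 24 * c ^ 2 - 3 * c ^ 3, -9 + 12 * c - 15 * c ^ 2 + 2 * c ^ 3,
    -9 + 12 * c - 15 * c ^ 2 + 2 * c ^ 3, 4, 4]

theorem F222_mulVec_eigenvector {R : Type*} [CommRing R] {c : R}
    (hc : c ^ 4 - 8 * c ^ 3 + 10 * c ^ 2 - 8 * c + 1 = 0) :
    F222.map ((↑) : ℤ → R) *ᵥ F222Eigenvector c = c • F222Eigenvector c := by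
  ext i
  fin_cases i <;>
    simp only [Matrix.mulVec, dotProduct, Fin.sum_univ_succ, Fin.sum_univ_zero, Matrix.map_apply,
      F222, F222Eigenvector, Matrix.of_apply, Matrix.cons_val', Matrix.cons_val, Matrix.cons_val_zero,
      Matrix.cons_val_succ, Matrix.cons_val_fin_one, Pi.smul_apply, smul_eq_mul, Fin.reduceFinMk,
      Fin.isValue] <;>
    push_cast <;>
    [linear_combination 3 * hc; linear_combination -5 * hc; linear_combination -4 * hc;
      linear_combination 3 * hc; linear_combination 3 * hc; linear_combination -2 * hc;
      linear_combination -2 * hc; ring; ring]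

theorem isRoot_cpF_dominantRoot : (cpF 2 2 2).IsRoot (dominantRoot : ℂ) := by
  have hc : (dominantRoot : ℂ) ^ 4 - 8 * (dominantRoot : ℂ) ^ 3 + 10 * (dominantRoot : ℂ) ^ 2
      - 8 * (dominantRoot : ℂ) + 1 = 0 := by exact_mod_cast dominantRoot_quartic
  have hv : F222Eigenvector (dominantRoot : ℂ) ≠ 0 := fun h => by
    simpa [F222Eigenvector] using congrFun h 7
  rw [cpF_two_two_two, ← Matrix.mem_spectrum_iff_isRoot_charpoly]
  exact Matrix.mem_spectrum_of_mulVec_eq_smul hv (F222_mulVec_eigenvector hc)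

/-- If `ρ` is the spectral radius of `F_{2,2,2}` (the maximum modulus of the complex
roots of its characteristic polynomial), then `ρ` is a real root of
`t⁴ − 8t³ + 10t² − 8t + 1` and `6 < ρ < 7`. -/
theorem specRad_F222 (ρ : ℝ)
    (hmem : ∃ z : ℂ, (cpF 2 2 2).IsRoot z ∧ ‖z‖ = ρ)
    (hmax : ∀ z : ℂ, (cpF 2 2 2).IsRoot z → ‖z‖ ≤ ρ) :
    ρ ^ 4 - 8 * ρ ^ 3 + 10 * ρ ^ 2 - 8 * ρ + 1 = 0 ∧ 6 < ρ ∧ ρ < 7 := by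
  obtain ⟨z, hz, rfl⟩ := hmem
  have hpos : 0 ≤ dominantRoot := by linarith [dominantRoot_mem_Ioo.1]
  have hge : dominantRoot ≤ ‖z‖ := by
    simpa [Complex.norm_real, Real.norm_of_nonneg hpos] using hmax _ isRoot_cpF_dominantRoot
  rw [le_antisymm (norm_le_dominantRoot_of_isRoot_cpF hz) hge]
  exact ⟨dominantRoot_quartic, dominantRoot_mem_Ioo⟩
end

section
/- The spectral radii of the integer matrices F_{5,1,0}, F_{4,1,1}, and F_{3,2,1} are all equal to (7 + 3√5)/2, the larger root of t² − 7t + 1 = 0: in each case this value is a root of the characteristic polynomial and every complex root of the characteristic polynomial has modulus at most (7 + 3√5)/2. -/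
open Matrix

open Polynomial Real goldenRatio

/-! Each of the three matrices is annihilated by `(X² - 7X + 1)(X² - 1)(X² - X + 1)`, so every
eigenvalue is `φ⁴ = (7 + 3√5)/2`, its inverse `ψ⁴`, or a root of unity, and none has modulus above
`φ⁴`. Conversely `φ⁴` is an eigenvalue: an eigenvector with entries in `ℤ[φ]` is written `a + φ b`
with integer vectors `a, b`, and since `φ⁴ = 3φ + 2`, `φ⁵ = 5φ + 3`, the equation
`M (a + φ b) = φ⁴ (a + φ b)` splits into the integer identities `M a = 2a + 3b`, `M b = 3a + 5b`.
Both facts are finite integer computations. -/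

theorem goldenRatio_pow_four : φ ^ 4 = (7 + 3 * √5) / 2 := by
  have h5 : √5 ^ 2 = 5 := Real.sq_sqrt (by norm_num)
  linear_combination (√5 ^ 2 + 4 * √5 + 11) / 16 * h5

theorem goldenConj_pow_four : ψ ^ 4 = (7 - 3 * √5) / 2 := by
  have h5 : √5 ^ 2 = 5 := Real.sq_sqrt (by norm_num)
  linear_combination (√5 ^ 2 - 4 * √5 + 11) / 16 * h5

theorem sq_sub_seven_mul_add_one_eq (z : ℂ) :
    z ^ 2 - 7 * z + 1 = (z - (φ ^ 4 : ℝ)) * (z - (ψ ^ 4 : ℝ)) := by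
  have h5 : ((√5 : ℝ) : ℂ) ^ 2 = 5 := mod_cast Real.sq_sqrt (by norm_num)
  rw [goldenRatio_pow_four, goldenConj_pow_four]
  push_cast
  linear_combination (9 / 4) * h5

theorem goldenConj_pow_four_le_one : ψ ^ 4 ≤ 1 := by
  rw [← (by decide : Even 4).pow_abs]
  exact pow_le_one₀ (abs_nonneg ψ)
    (abs_le.2 ⟨neg_one_lt_goldenConj.le, goldenConj_neg.le.trans zero_le_one⟩)

theorem norm_eq_one_of_sq_sub_one_mul_eq_zero {z : ℂ} (hz : (z ^ 2 - 1) * (z ^ 2 - z + 1) = 0) :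
    ‖z‖ = 1 := by
  refine Complex.norm_eq_one_of_pow_eq_one (n := 6) ?_ (by norm_num)
  linear_combination (z ^ 2 + z + 1) * hz

noncomputable def annihilatingPoly : ℤ[X] := (X ^ 2 - 7 * X + 1) * ((X ^ 2 - 1) * (X ^ 2 - X + 1))

theorem aeval_annihilatingPoly {A : Type*} [Ring A] [Algebra ℤ A] (a : A) :
    aeval a annihilatingPoly = (a ^ 2 - 7 * a + 1) * ((a ^ 2 - 1) * (a ^ 2 - a + 1)) := by
  simp [annihilatingPoly, map_ofNat]

theorem norm_le_goldenRatio_pow_four_of_aeval_eq_zero {z : ℂ}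
    (hz : aeval z annihilatingPoly = 0) : ‖z‖ ≤ φ ^ 4 := by
  have one_le : 1 ≤ φ ^ 4 := one_le_pow₀ one_lt_goldenRatio.le
  rw [aeval_annihilatingPoly, sq_sub_seven_mul_add_one_eq] at hz
  obtain hz | hz := mul_eq_zero.1 hz
  · obtain hz | hz := mul_eq_zero.1 hz <;>
      rw [sub_eq_zero.1 hz, Complex.norm_real, Real.norm_eq_abs, abs_of_nonneg (by positivity)]
    exact goldenConj_pow_four_le_one.trans one_le
  · exact (norm_eq_one_of_sq_sub_one_mul_eq_zero hz).trans_le one_le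

namespace Matrix

variable {n : Type*} [Fintype n] [DecidableEq n]

theorem isRoot_charpoly_of_mulVec_eq_smul {R : Type*} [CommRing R] [IsDomain R]
    {A : Matrix n n R} {v : n → R} {μ : R} (hv : v ≠ 0) (h : A *ᵥ v = μ • v) :
    A.charpoly.IsRoot μ := by
  rw [IsRoot, eval_charpoly, ← exists_mulVec_eq_zero_iff]
  refine ⟨v, hv, ?_⟩
  simp [sub_mulVec, h]

theorem isRoot_of_aeval_eq_zero_of_isRoot_charpoly {K : Type*} [Field K] {A : Matrix n n K}
    {p : K[X]} (hp : aeval A p = 0) {z : K} (hz : A.charpoly.IsRoot z) : p.IsRoot z := by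
  have hmem :=
    spectrum.subset_polynomial_aeval A p ⟨z, mem_spectrum_iff_isRoot_charpoly.2 hz, rfl⟩
  rw [hp, spectrum.mem_iff, sub_zero] at hmem
  by_contra h
  exact hmem ((Ne.isUnit h).map _)

theorem aeval_map_intCast_eq_zero {R : Type*} [Ring R] {M : Matrix n n ℤ} {p : ℤ[X]}
    (hp : aeval M p = 0) : aeval (M.map (Int.cast : ℤ → R)) p = 0 := by
  have h := aeval_algHom_apply (Int.castRingHom R).mapMatrix.toIntAlgHom M p
  rwa [hp, map_zero] at h

end Matrix

theorem mulVec_add_mul_eq_pow_four_smul {n R : Type*} [Fintype n] [CommRing R] (M : Matrix n n ℤ)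
    {a b : n → ℤ} (hMa : M *ᵥ a = 2 • a + 3 • b) (hMb : M *ᵥ b = 3 • a + 5 • b)
    {x : R} (hx : x ^ 2 = x + 1) :
    M.map (Int.cast : ℤ → R) *ᵥ (fun i => a i + x * b i) = x ^ 4 • fun i => a i + x * b i := by
  have hcast (c : n → ℤ) : M.map (Int.cast : ℤ → R) *ᵥ (fun i => (c i : R)) =
      fun i => ((M *ᵥ c) i : R) :=
    funext fun i => (RingHom.map_mulVec (Int.castRingHom R) M c i).symm
  have hsplit : (fun i => (a i + x * b i : R)) = (fun i => (a i : R)) + x • fun i => (b i : R) :=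
    rfl
  rw [hsplit, mulVec_add, mulVec_smul, hcast, hcast, hMa, hMb]
  ext i
  simp only [nsmul_eq_mul, Nat.cast_ofNat, Pi.add_apply, Pi.mul_apply, Pi.ofNat_apply,
    Int.cast_add, Int.cast_mul, Int.cast_ofNat, Pi.smul_apply, smul_eq_mul]
  linear_combination (-(x ^ 2 + x + 2) * a i - (x ^ 3 + x ^ 2 + 2 * x + 3) * b i) * hx

theorem intCast_add_goldenRatio_mul_ne_zero {n : Type*} {a b : n → ℤ} (hb : b ≠ 0) :
    (fun i => (a i : ℂ) + (φ : ℂ) * b i) ≠ 0 := by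
  obtain ⟨i, hi⟩ := Function.ne_iff.1 hb
  have hirr := (goldenRatio_irrational.mul_intCast hi).intCast_add (a i)
  intro h
  have hi0 := congrFun h i
  rw [Pi.zero_apply] at hi0
  exact hirr.ne_zero (mod_cast hi0)

def IsRootOfMaxNorm (p : ℂ[X]) (r : ℝ) : Prop :=
  p.IsRoot r ∧ ∀ z : ℂ, p.IsRoot z → ‖z‖ ≤ r

theorem isRootOfMaxNorm_charpoly_goldenRatio_pow_four {n : Type*} [Fintype n] [DecidableEq n]
    (M : Matrix n n ℤ) {a b : n → ℤ} (hb : b ≠ 0) (hMa : M *ᵥ a = 2 • a + 3 • b)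
    (hMb : M *ᵥ b = 3 • a + 5 • b) (hM : aeval M annihilatingPoly = 0) :
    IsRootOfMaxNorm (M.map fun x => (x : ℂ)).charpoly (φ ^ 4) := by
  refine ⟨?_, fun z hz => norm_le_goldenRatio_pow_four_of_aeval_eq_zero ?_⟩
  · have hφ : (φ : ℂ) ^ 2 = φ + 1 := mod_cast goldenRatio_sq
    rw [Complex.ofReal_pow]
    exact Matrix.isRoot_charpoly_of_mulVec_eq_smul (intCast_add_goldenRatio_mul_ne_zero hb)
      (mulVec_add_mul_eq_pow_four_smul M hMa hMb hφ)
  · have hA := Matrix.aeval_map_intCast_eq_zero (R := ℂ) hM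
    rw [← aeval_map_algebraMap ℂ] at hA
    have hroot := Matrix.isRoot_of_aeval_eq_zero_of_isRoot_charpoly hA hz
    rwa [IsRoot, eval_map_algebraMap] at hroot

-- Each `b` lies in the kernel of `M² - 7M + 1`, and `a = (M b - 5b) / 3`.
theorem isRootOfMaxNorm_cpF_5_1_0 : IsRootOfMaxNorm (cpF 5 1 0) (φ ^ 4) :=
  isRootOfMaxNorm_charpoly_goldenRatio_pow_four (Fm 5 1 0) (a := ![-3, -9, -3, 3, 3, 3, 3, 3, -3])
    (b := ![-9, -7, 6, 0, 0, 0, 0, 0, -4]) (by decide) (by decide) (by decide)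
    (by rw [aeval_annihilatingPoly]; decide)

theorem isRootOfMaxNorm_cpF_4_1_1 : IsRootOfMaxNorm (cpF 4 1 1) (φ ^ 4) :=
  isRootOfMaxNorm_charpoly_goldenRatio_pow_four (Fm 4 1 1) (a := ![1, 3, 1, -1, -1, -1, -1, 1, -1])
    (b := ![3, 2, -2, 0, 0, 0, 0, 1, -1]) (by decide) (by decide) (by decide)
    (by rw [aeval_annihilatingPoly]; decide)

theorem isRootOfMaxNorm_cpF_3_2_1 : IsRootOfMaxNorm (cpF 3 2 1) (φ ^ 4) :=
  isRootOfMaxNorm_charpoly_goldenRatio_pow_four (Fm 3 2 1) (a := ![-6, 2, 8, -3, -3, -3, 0, 0, 1])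
    (b := ![-3, -10, -1, 3, 3, 3, -3, -3, 4]) (by decide) (by decide) (by decide)
    (by rw [aeval_annihilatingPoly]; decide)

/-- The spectral radii of `F_{5,1,0}`, `F_{4,1,1}` and `F_{3,2,1}` are all equal to
`(7 + 3√5)/2`, the larger root of `t² − 7t + 1 = 0`: in each case this value is a
root of the characteristic polynomial and every complex root has modulus at most it. -/
theorem specRad_F510_F411_F321 :
    (((7 + 3 * Real.sqrt 5) / 2 : ℝ) ^ 2 - 7 * ((7 + 3 * Real.sqrt 5) / 2 : ℝ) + 1 = 0) ∧
    ((cpF 5 1 0).IsRoot (((7 + 3 * Real.sqrt 5) / 2 : ℝ) : ℂ) ∧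
      ∀ z : ℂ, (cpF 5 1 0).IsRoot z → ‖z‖ ≤ (7 + 3 * Real.sqrt 5) / 2) ∧
    ((cpF 4 1 1).IsRoot (((7 + 3 * Real.sqrt 5) / 2 : ℝ) : ℂ) ∧
      ∀ z : ℂ, (cpF 4 1 1).IsRoot z → ‖z‖ ≤ (7 + 3 * Real.sqrt 5) / 2) ∧
    ((cpF 3 2 1).IsRoot (((7 + 3 * Real.sqrt 5) / 2 : ℝ) : ℂ) ∧
      ∀ z : ℂ, (cpF 3 2 1).IsRoot z → ‖z‖ ≤ (7 + 3 * Real.sqrt 5) / 2) := by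
  have h5 : √5 ^ 2 = 5 := Real.sq_sqrt (by norm_num)
  refine ⟨by linear_combination (9 / 4) * h5, ?_⟩
  rw [← goldenRatio_pow_four]
  exact ⟨isRootOfMaxNorm_cpF_5_1_0, isRootOfMaxNorm_cpF_4_1_1, isRootOfMaxNorm_cpF_3_2_1⟩
end
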